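/- arXiv:2509.16815 — 4 statements merged into one kernel-verified Lean document; each statement's English description precedes it below -/
import Mathlib

section
/- Let G = (V,E) be a finite simple graph, k ≥ 1 an integer, v a large-sparse vertex of G, and B ⊆ V \ {v}. Suppose at least k+1 connected components of G − ({v} ∪ B) each contain a cycle and contain at least one neighbor of v. Then every feasible solution for (G,k) contains v. -/
/-!
Suppose `v ∉ X`. The `k + 1` components of `G − ({v} ∪ B)` are vertex-disjoint and `|X| ≤ k`, so
one of them, `c`, avoids `X`. Since `c` contains a neighbour of `v`, the component of `G − X`
containing `v` contains all of `c` and hence its cycle; it is therefore not a tree, so it is a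
clique. It also contains every neighbour of `v` outside `X`, so these `t ≥ |N(v)| − k` vertices are
pairwise adjacent and `ρ(v) ≥ t(t−1)/2`. As `|N(v)| > 7k`, this exceeds `|N(v)|(|N(v)|−1)/4`,
contradicting sparseness.
-/

open SimpleGraph

/-- The number of edges of `G` with both endpoints in the neighborhood of `v`. -/
noncomputable def rho {V : Type*} (G : SimpleGraph V) (v : V) : ℕ :=
  {e : Sym2 V | e ∈ G.edgeSet ∧ ∀ x ∈ e, G.Adj v x}.ncard

/-- `v` is large-sparse: `|N(v)| > 7k` and `ρ(v) ≤ |N(v)|(|N(v)|−1)/4`. -/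
def LargeSparse {V : Type*} (G : SimpleGraph V) (k : ℕ) (v : V) : Prop :=
  7 * k < (G.neighborSet v).ncard ∧
    4 * rho G v ≤ (G.neighborSet v).ncard * ((G.neighborSet v).ncard - 1)

/-- `v` is large-dense: `|N(v)| > 7k` and `ρ(v) > |N(v)|(|N(v)|−1)/4`. -/
def LargeDense {V : Type*} (G : SimpleGraph V) (k : ℕ) (v : V) : Prop :=
  7 * k < (G.neighborSet v).ncard ∧
    (G.neighborSet v).ncard * ((G.neighborSet v).ncard - 1) < 4 * rho G v

/-- The connected component `c` of `H` is a clique. -/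
def CompIsClique {W : Type*} (H : SimpleGraph W) (c : H.ConnectedComponent) : Prop :=
  H.IsClique c.supp

/-- The connected component `c` of `H` is a tree. -/
def CompIsTree {W : Type*} (H : SimpleGraph W) (c : H.ConnectedComponent) : Prop :=
  (H.induce c.supp).IsTree

/-- Every connected component of `H` is a clique or a tree. -/
def CliquesOrTrees {W : Type*} (H : SimpleGraph W) : Prop :=
  ∀ c : H.ConnectedComponent, CompIsClique H c ∨ CompIsTree H c

/-- `X` is a feasible solution for `(G, k)`: `|X| ≤ k` and every connected component of
`G − X` is a clique or a tree. -/
def IsFeasible {V : Type*} (G : SimpleGraph V) (k : ℕ) (X : Set V) : Prop :=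
  X.ncard ≤ k ∧ CliquesOrTrees (G.induce (Xᶜ : Set V))

namespace SimpleGraph

variable {W : Type*}

theorem ConnectedComponent.exists_mem_disjoint_supp_of_ncard_lt {H : SimpleGraph W}
    {𝒞 : Set H.ConnectedComponent} {Y : Set W} (hY : Y.Finite) (h : Y.ncard < 𝒞.ncard) :
    ∃ c ∈ 𝒞, Disjoint c.supp Y := by
  have hlt : (H.connectedComponentMk '' Y).ncard < 𝒞.ncard := (Set.ncard_image_le hY).trans_lt h
  obtain ⟨c, hc, hcY⟩ := Set.exists_mem_notMem_of_ncard_lt_ncard hlt (hY.image _)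
  exact ⟨c, hc, Set.disjoint_left.2 fun y hy hyY => hcY ⟨y, hyY, hy⟩⟩

theorem Connected.not_isAcyclic_induce_supp_of_injective {U : Type*} {F : SimpleGraph U}
    {H : SimpleGraph W} (hF : F.Connected) (hcyc : ¬F.IsAcyclic) (φ : F →g H)
    (hφ : Function.Injective φ) (y : U) :
    ¬(H.induce (H.connectedComponentMk (φ y)).supp).IsAcyclic := by
  have hmem (z : U) : φ z ∈ (H.connectedComponentMk (φ y)).supp :=
    ConnectedComponent.sound ((hF.preconnected y z).map φ).symm
  let ψ : F →g H.induce (H.connectedComponentMk (φ y)).supp :=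
    { toFun := fun z => ⟨φ z, hmem z⟩, map_rel' := φ.map_rel' }
  exact fun hacyc => hcyc (hacyc.comap ψ fun a b hab => hφ (congrArg Subtype.val hab))

end SimpleGraph

section

variable {V : Type*} {G : SimpleGraph V}

theorem choose_two_ncard_le_rho [Finite V] {v : V} {s : Set V} (hs : s ⊆ G.neighborSet v)
    (hcl : G.IsClique s) : s.ncard.choose 2 ≤ rho G v := by
  classical
  obtain ⟨s, rfl⟩ := (Set.toFinite s).exists_finset_coe
  have hsub : ((s.offDiag.image Sym2.mk.uncurry : Finset (Sym2 V)) : Set (Sym2 V)) ⊆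
      {e : Sym2 V | e ∈ G.edgeSet ∧ ∀ x ∈ e, G.Adj v x} := by
    intro e he
    obtain ⟨⟨x, y⟩, hxy, rfl⟩ := Finset.mem_image.1 he
    obtain ⟨hx, hy, hne⟩ := Finset.mem_offDiag.1 hxy
    refine ⟨hcl hx hy hne, fun z hz => ?_⟩
    rcases Sym2.mem_iff.1 hz with rfl | rfl
    exacts [hs hx, hs hy]
  rw [Set.ncard_coe_finset, ← Sym2.card_image_offDiag, ← Set.ncard_coe_finset]
  exact Set.ncard_le_ncard hsub

theorem isClique_neighborSet_sdiff {X : Set V} {v : V} (hv : v ∉ X)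
    (h : CompIsClique (G.induce Xᶜ) ((G.induce Xᶜ).connectedComponentMk ⟨v, hv⟩)) :
    G.IsClique (G.neighborSet v \ X) := by
  refine (isClique_induce_iff.1 h).subset fun w ⟨hvw, hwX⟩ => ?_
  have hadj : (G.induce Xᶜ).Adj ⟨w, hwX⟩ ⟨v, hv⟩ := hvw.symm
  exact ⟨⟨w, hwX⟩, ConnectedComponent.sound hadj.reachable, rfl⟩

theorem not_compIsTree_of_adj_cyclic_component {S X : Set V} {v u : V} (hv : v ∉ X)
    {c : (G.induce S).ConnectedComponent} (hcyc : ¬((G.induce S).induce c.supp).IsAcyclic)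
    (hcX : Disjoint c.supp (Subtype.val ⁻¹' X)) (hu : u ∈ S) (huc : ⟨u, hu⟩ ∈ c.supp)
    (hvu : G.Adj v u) :
    ¬CompIsTree (G.induce Xᶜ) ((G.induce Xᶜ).connectedComponentMk ⟨v, hv⟩) := by
  let φ := induceHom (Embedding.induce (G := G) S).toHom (t := Xᶜ)
    fun x hx => Set.disjoint_left.1 hcX hx
  have hφ : Function.Injective φ := induceHom_injective _ _ Subtype.val_injective.injOn
  have hK : (G.induce Xᶜ).connectedComponentMk ⟨v, hv⟩ =
      (G.induce Xᶜ).connectedComponentMk (φ ⟨⟨u, hu⟩, huc⟩) :=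
    ConnectedComponent.sound (show (G.induce Xᶜ).Adj ⟨v, hv⟩ (φ ⟨⟨u, hu⟩, huc⟩) from hvu).reachable
  rw [CompIsTree, hK]
  exact fun htree => c.connected_toSimpleGraph.not_isAcyclic_induce_supp_of_injective hcyc φ hφ
    ⟨⟨u, hu⟩, huc⟩ htree.isAcyclic

theorem mul_pred_lt_four_mul_choose_two {k n t : ℕ} (hk : 1 ≤ k) (hn : 7 * k < n)
    (ht : n ≤ t + k) : n * (n - 1) < 4 * t.choose 2 := by
  have h2 : 2 * t.choose 2 = t * (t - 1) := by
    rw [Nat.choose_two_right, Nat.mul_div_cancel' (Nat.even_mul_pred_self t).two_dvd]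
  obtain ⟨n, rfl⟩ : ∃ m, n = m + 1 := ⟨n - 1, by omega⟩
  obtain ⟨t, rfl⟩ : ∃ m, t = m + 1 := ⟨t - 1, by omega⟩
  simp only [Nat.add_sub_cancel] at h2 ⊢
  nlinarith

end

theorem stmt_5_general {V : Type*} [Fintype V] (G : SimpleGraph V) (k : ℕ) (hk : 1 ≤ k) (v : V)
    (hv : LargeSparse G k v) (B : Set V)
    (𝒞 : Set (G.induce (({v} ∪ B)ᶜ : Set V)).ConnectedComponent)
    (h𝒞card : k + 1 ≤ 𝒞.ncard)
    (h𝒞cyc : ∀ c ∈ 𝒞, ¬ ((G.induce (({v} ∪ B)ᶜ : Set V)).induce c.supp).IsAcyclic)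
    (h𝒞nbr : ∀ c ∈ 𝒞, ∃ u ∈ c.supp, G.Adj v (u : V))
    (X : Set V) (hX : IsFeasible G k X) :
    v ∈ X := by
  by_contra hvX
  have hXS : (Subtype.val ⁻¹' X : Set (({v} ∪ B)ᶜ : Set V)).ncard ≤ X.ncard :=
    Set.ncard_le_ncard_of_injOn _ (fun _ h => h) Subtype.val_injective.injOn
  obtain ⟨c, hc, hcX⟩ := ConnectedComponent.exists_mem_disjoint_supp_of_ncard_lt
    (Set.toFinite _) (by linarith [hX.1])
  obtain ⟨⟨u, hu⟩, huc, hvu⟩ := h𝒞nbr c hc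
  have hclique := (hX.2 _).resolve_right
    (not_compIsTree_of_adj_cyclic_component hvX (h𝒞cyc c hc) hcX hu huc hvu)
  have hρ := choose_two_ncard_le_rho Set.sdiff_subset (isClique_neighborSet_sdiff hvX hclique)
  have hsize : (G.neighborSet v).ncard ≤ (G.neighborSet v \ X).ncard + k :=
    (Set.ncard_le_ncard_sdiff_add_ncard _ X).trans (by linarith [hX.1])
  have hdense := mul_pred_lt_four_mul_choose_two hk hv.1 hsize
  linarith [hv.2]

/-- if `v` is large-sparse, `B ⊆ V \ {v}`, and at least `k+1` connected
components of `G − ({v} ∪ B)` each contain a cycle and contain a neighbor of `v`, then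
every feasible solution for `(G,k)` contains `v`. -/
theorem stmt_5 {V : Type*} [Fintype V] (G : SimpleGraph V) (k : ℕ) (hk : 1 ≤ k) (v : V)
    (hv : LargeSparse G k v) (B : Set V) (hvB : v ∉ B)
    (𝒞 : Set (G.induce (({v} ∪ B)ᶜ : Set V)).ConnectedComponent)
    (h𝒞card : k + 1 ≤ 𝒞.ncard)
    (h𝒞cyc : ∀ c ∈ 𝒞, ¬ ((G.induce (({v} ∪ B)ᶜ : Set V)).induce c.supp).IsAcyclic)
    (h𝒞nbr : ∀ c ∈ 𝒞, ∃ u ∈ c.supp, G.Adj v (u : V))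
    (X : Set V) (hX : IsFeasible G k X) :
    v ∈ X :=
  stmt_5_general G k hk v hv B 𝒞 h𝒞card h𝒞cyc h𝒞nbr X hX
end

section
/- Let G = (V,E) be a finite simple graph and k ≥ 1 an integer. Let 𝒫 be a family of 3-element subsets of the set of large-dense vertices of G such that each member of 𝒫 induces a P3 in G, any two distinct members of 𝒫 share at most one vertex, and every vertex of G belongs to at most k members of 𝒫. If |𝒫| > k², then there is no feasible solution for (G,k). -/
/-!
Every member `{v₁, v₂, v₃}` of the family must meet a feasible solution `X`. Otherwise the
three vertices lie in one component of `G − X`; it is not a clique because `v₁v₃` is missing,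
and it is not a tree because `v₁` is large-dense: the `ρ(v₁) > k |N(v₁)|` edges inside
`N(v₁)` cannot all be hit by the `≤ k` vertices of `X`, each of which lies on at most
`|N(v₁)|` of them, so some edge `ab` of `N(v₁)` survives and `v₁ab` is a triangle.
Since every vertex lies in at most `k` members, double counting gives `|F| ≤ k |X| ≤ k²`.
-/

open SimpleGraph

theorem Set.ncard_le_ncard_mul_of_forall_exists {α β : Type*} {s : Set α} {t : Set β}
    (ht : t.Finite) (r : α → β → Prop) (hs : ∀ a ∈ s, ∃ b ∈ t, r a b) {n : ℕ}
    (hn : ∀ b ∈ t, {a ∈ s | r a b}.ncard ≤ n) : s.ncard ≤ t.ncard * n := by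
  classical
  obtain hsf | hsi := s.finite_or_infinite
  · have key := Finset.card_mul_le_card_mul r (s := hsf.toFinset) (t := ht.toFinset)
      (m := 1) (n := n)
      (fun a ha ↦ Finset.one_le_card.2 <| by
        obtain ⟨b, hb, hab⟩ := hs a (hsf.mem_toFinset.1 ha)
        exact ⟨b, Finset.mem_filter.2 ⟨ht.mem_toFinset.2 hb, hab⟩⟩)
      (fun b hb ↦ by
        rw [← Set.ncard_coe_finset, Finset.coe_bipartiteBelow]
        simpa only [Set.Finite.mem_toFinset] using hn b (ht.mem_toFinset.1 hb))
    rwa [mul_one, ← Set.ncard_eq_toFinset_card s hsf, ← Set.ncard_eq_toFinset_card t ht] at key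
  · simp [hsi.ncard]

theorem Sym2.ncard_setOf_mem_forall_mem_le {α : Type*} {S : Set α} (hS : S.Finite) (x : α) :
    {e : Sym2 α | x ∈ e ∧ ∀ y ∈ e, y ∈ S}.ncard ≤ S.ncard := by
  classical
  refine Set.ncard_le_ncard_of_injOn (fun e ↦ if h : x ∈ e then Sym2.Mem.other h else x)
    (fun e ⟨hx, hS⟩ ↦ ?_) (fun e₁ ⟨hx₁, _⟩ e₂ ⟨hx₂, _⟩ h ↦ ?_) hS
  · simpa only [dif_pos hx] using hS _ (Sym2.other_mem hx)
  · simp only [dif_pos hx₁, dif_pos hx₂] at h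
    rw [← Sym2.other_spec hx₁, ← Sym2.other_spec hx₂, h]

theorem LargeDense.mul_ncard_neighborSet_lt_rho {V : Type*} {G : SimpleGraph V} {k : ℕ} {v : V}
    (hv : LargeDense G k v) : k * (G.neighborSet v).ncard < rho G v := by
  obtain ⟨hdeg, hdense⟩ := hv
  set n := (G.neighborSet v).ncard
  have : 4 * (k * n) ≤ n * (n - 1) :=
    calc 4 * (k * n) = 4 * k * n := by ring
      _ ≤ (n - 1) * n := Nat.mul_le_mul_right n (by omega)
      _ = n * (n - 1) := Nat.mul_comm _ _
  omega

section LargeDense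

variable {V : Type*} [Finite V] {G : SimpleGraph V}

theorem exists_adj_neighborSet_notMem_of_ncard_mul_lt_rho {v : V} {X : Set V}
    (hX : X.ncard * (G.neighborSet v).ncard < rho G v) :
    ∃ a b : V, G.Adj a b ∧ G.Adj v a ∧ G.Adj v b ∧ a ∉ X ∧ b ∉ X := by
  set Ev := {e : Sym2 V | e ∈ G.edgeSet ∧ ∀ y ∈ e, G.Adj v y}
  have hhit : {e ∈ Ev | ∃ x ∈ X, x ∈ e}.ncard ≤ X.ncard * (G.neighborSet v).ncard := by
    refine Set.ncard_le_ncard_mul_of_forall_exists X.toFinite (fun e x ↦ x ∈ e)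
      (fun e he ↦ he.2) fun x _ ↦ ?_
    refine (Set.ncard_le_ncard ?_).trans
      (Sym2.ncard_setOf_mem_forall_mem_le (G.neighborSet v).toFinite x)
    exact fun e ⟨⟨⟨_, hadj⟩, _⟩, hx⟩ ↦ ⟨hx, hadj⟩
  obtain ⟨e, heE, heX⟩ : ∃ e ∈ Ev, e ∉ {e ∈ Ev | ∃ x ∈ X, x ∈ e} := by
    by_contra! h
    have : rho G v ≤ _ := Set.ncard_le_ncard h
    omega
  induction e using Sym2.ind with
  | _ a b =>
    exact ⟨a, b, heE.1, heE.2 a (by simp), heE.2 b (by simp),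
      fun ha ↦ heX ⟨heE, a, ha, by simp⟩, fun hb ↦ heX ⟨heE, b, hb, by simp⟩⟩

theorem LargeDense.exists_adj_neighborSet_notMem {k : ℕ} {v : V} (hv : LargeDense G k v)
    {X : Set V} (hX : X.ncard ≤ k) :
    ∃ a b : V, G.Adj a b ∧ G.Adj v a ∧ G.Adj v b ∧ a ∉ X ∧ b ∉ X :=
  exists_adj_neighborSet_notMem_of_ncard_mul_lt_rho <|
    (Nat.mul_le_mul_right _ hX).trans_lt hv.mul_ncard_neighborSet_lt_rho

end LargeDense

section Components

variable {W : Type*} {H : SimpleGraph W} {u v w : W}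

theorem not_compIsClique_of_adj_of_adj_of_not_adj (huv : H.Adj u v) (hvw : H.Adj v w)
    (huw : ¬H.Adj u w) (hne : u ≠ w) : ¬CompIsClique H (H.connectedComponentMk u) := by
  intro hc
  have hw : w ∈ (H.connectedComponentMk u).supp :=
    (ConnectedComponent.connectedComponentMk_eq_of_adj huv).trans
      (ConnectedComponent.connectedComponentMk_eq_of_adj hvw) |>.symm
  exact huw (hc rfl hw hne)

theorem not_compIsTree_of_adj_of_adj_of_adj (huv : H.Adj u v) (hvw : H.Adj v w)
    (huw : H.Adj u w) : ¬CompIsTree H (H.connectedComponentMk u) := by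
  classical
  intro ⟨_, hacyc⟩
  set c := H.connectedComponentMk u
  have hv : v ∈ c.supp := (ConnectedComponent.connectedComponentMk_eq_of_adj huv).symm
  have hw : w ∈ c.supp := (ConnectedComponent.connectedComponentMk_eq_of_adj huw).symm
  refine hacyc.cliqueFree le_rfl {⟨u, rfl⟩, ⟨v, hv⟩, ⟨w, hw⟩} ?_
  rw [is3Clique_triple_iff]
  exact ⟨huv, huw, hvw⟩

end Components

theorem IsFeasible.exists_mem_of_induces_P3 {V : Type*} [Finite V] {G : SimpleGraph V} {k : ℕ}
    {X : Set V} (hX : IsFeasible G k X) {v₁ v₂ v₃ : V} (hv₁ : LargeDense G k v₁)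
    (h₁₂ : G.Adj v₁ v₂) (h₂₃ : G.Adj v₂ v₃) (h₁₃ : ¬G.Adj v₁ v₃) (hne : v₁ ≠ v₃) :
    v₁ ∈ X ∨ v₂ ∈ X ∨ v₃ ∈ X := by
  by_contra! ⟨h₁, h₂, h₃⟩
  obtain ⟨a, b, hab, h₁a, h₁b, ha, hb⟩ := hv₁.exists_adj_neighborSet_notMem hX.1
  set H := G.induce (Xᶜ : Set V)
  rcases hX.2 (H.connectedComponentMk ⟨v₁, h₁⟩) with hclique | htree
  · exact not_compIsClique_of_adj_of_adj_of_not_adj (H := H) (u := ⟨v₁, h₁⟩) (v := ⟨v₂, h₂⟩)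
      (w := ⟨v₃, h₃⟩) h₁₂ h₂₃ h₁₃ (by simpa using hne) hclique
  · exact not_compIsTree_of_adj_of_adj_of_adj (H := H) (u := ⟨v₁, h₁⟩) (v := ⟨a, ha⟩)
      (w := ⟨b, hb⟩) h₁a hab h₁b htree

theorem stmt_9_general {V : Type*} [Fintype V] (G : SimpleGraph V) (k : ℕ)
    (F : Set (Set V))
    (hP3 : ∀ P ∈ F, ∃ v1 v2 v3 : V, P = {v1, v2, v3} ∧
      v1 ≠ v2 ∧ v2 ≠ v3 ∧ v1 ≠ v3 ∧
      LargeDense G k v1 ∧ LargeDense G k v2 ∧ LargeDense G k v3 ∧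
      G.Adj v1 v2 ∧ G.Adj v2 v3 ∧ ¬ G.Adj v1 v3)
    (hdeg : ∀ v : V, {P ∈ F | v ∈ P}.ncard ≤ k)
    (hbig : k ^ 2 < F.ncard) :
    ¬ ∃ X : Set V, IsFeasible G k X := by
  rintro ⟨X, hX⟩
  have hmeets : ∀ P ∈ F, ∃ x ∈ X, x ∈ P := by
    intro P hP
    obtain ⟨v₁, v₂, v₃, rfl, -, -, hne, hv₁, -, -, h₁₂, h₂₃, h₁₃⟩ := hP3 P hP
    rcases hX.exists_mem_of_induces_P3 hv₁ h₁₂ h₂₃ h₁₃ hne with h | h | h <;>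
      exact ⟨_, h, by simp⟩
  have hcount : F.ncard ≤ X.ncard * k :=
    Set.ncard_le_ncard_mul_of_forall_exists X.toFinite (fun P x ↦ x ∈ P) hmeets
      fun x _ ↦ hdeg x
  have hX_le : X.ncard * k ≤ k ^ 2 := sq k ▸ Nat.mul_le_mul_right k hX.1
  omega

/-- let `F` be a family of 3-element subsets of the large-dense vertices,
each inducing a `P₃`, pairwise sharing at most one vertex, such that every vertex lies in
at most `k` members. If `|F| > k²`, then `(G,k)` has no feasible solution. -/
theorem stmt_9 {V : Type*} [Fintype V] (G : SimpleGraph V) (k : ℕ) (hk : 1 ≤ k)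
    (F : Set (Set V))
    (hP3 : ∀ P ∈ F, ∃ v1 v2 v3 : V, P = {v1, v2, v3} ∧
      v1 ≠ v2 ∧ v2 ≠ v3 ∧ v1 ≠ v3 ∧
      LargeDense G k v1 ∧ LargeDense G k v2 ∧ LargeDense G k v3 ∧
      G.Adj v1 v2 ∧ G.Adj v2 v3 ∧ ¬ G.Adj v1 v3)
    (hpair : ∀ P ∈ F, ∀ Q ∈ F, P ≠ Q → (P ∩ Q).ncard ≤ 1)
    (hdeg : ∀ v : V, {P ∈ F | v ∈ P}.ncard ≤ k)
    (hbig : k ^ 2 < F.ncard) :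
    ¬ ∃ X : Set V, IsFeasible G k X :=
  stmt_9_general G k F hP3 hdeg hbig
end

section
/- Let G = (V,E) be a finite simple graph, k ≥ 1 an integer, and u, v two adjacent large-dense vertices of G with N(u) ∪ {u} = N(v) ∪ {v}. Then every feasible solution X for (G,k) of minimum cardinality among all feasible solutions satisfies either {u,v} ⊆ X or {u,v} ∩ X = ∅. -/
open SimpleGraph

/-! If `u ∈ X` but `v ∉ X`, then `X \ {u}` is still feasible, contradicting minimality.
Because `|X| ≤ k < |N(v)|/7` while more than a quarter of the pairs in `N(v)` are edges, some
edge `ab` inside `N(v)` avoids `X` (otherwise `ρ(v) ≤ k·|N(v)|`). The triangle `vab` keeps the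
component `C` of `v` in `G − X` from being a tree, so `C` is a clique. Putting `u` back, its
neighbours outside `X` all lie in `C`, and `u` is adjacent to all of `C` since `N[u] = N[v]`;
hence the component of `u` in `G − (X \ {u})` is the clique `C ∪ {u}`, and every other
component is a component of `G − X`. -/

section

variable {V : Type*} {G : SimpleGraph V} {s t : Set V}

lemma rho_le_ncard_inter_mul {v : V} {X : Set V} (hN : (G.neighborSet v).Finite)
    (hX : ∀ a b, G.Adj v a → G.Adj v b → G.Adj a b → a ∈ X ∨ b ∈ X) :
    rho G v ≤ (X ∩ G.neighborSet v).ncard * (G.neighborSet v).ncard := by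
  have hsub : {e : Sym2 V | e ∈ G.edgeSet ∧ ∀ x ∈ e, G.Adj v x} ⊆
      (fun p : V × V => s(p.1, p.2)) '' ((X ∩ G.neighborSet v) ×ˢ G.neighborSet v) := by
    rintro ⟨a, b⟩ ⟨hab, hN⟩
    have hva : G.Adj v a := hN a (Sym2.mem_mk_left a b)
    have hvb : G.Adj v b := hN b (Sym2.mem_mk_right a b)
    rcases hX a b hva hvb hab with ha | hb
    · exact ⟨(a, b), ⟨⟨ha, hva⟩, hvb⟩, rfl⟩
    · exact ⟨(b, a), ⟨⟨hb, hvb⟩, hva⟩, Sym2.eq_swap⟩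
  have hfin : ((X ∩ G.neighborSet v) ×ˢ G.neighborSet v).Finite :=
    (hN.subset Set.inter_subset_right).prod hN
  calc rho G v ≤ _ := Set.ncard_le_ncard hsub (hfin.image _)
    _ ≤ _ := Set.ncard_image_le hfin
    _ = _ := Set.ncard_prod

lemma LargeDense.exists_triangle {k : ℕ} {v : V} {X : Set V} (hv : LargeDense G k v)
    (hXfin : X.Finite) (hXk : X.ncard ≤ k) :
    ∃ a b, a ∉ X ∧ b ∉ X ∧ G.Adj v a ∧ G.Adj v b ∧ G.Adj a b := by
  by_contra! h
  obtain ⟨hlarge, hdense⟩ := hv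
  have hρ := rho_le_ncard_inter_mul (G := G) (v := v) (X := X)
    (Set.finite_of_ncard_pos (by omega)) fun a b hva hvb hab => by
      by_contra! hab'
      exact h a b hab'.1 hab'.2 hva hvb hab
  have hXN : (X ∩ G.neighborSet v).ncard ≤ k :=
    (Set.ncard_le_ncard Set.inter_subset_left hXfin).trans hXk
  have h7k : 7 * k ≤ (G.neighborSet v).ncard - 1 := by omega
  nlinarith [Nat.mul_le_mul_left (G.neighborSet v).ncard h7k,
    Nat.mul_le_mul_right (G.neighborSet v).ncard hXN]

lemma CliquesOrTrees.isClique_supp_of_adj {W : Type*} {H : SimpleGraph W} {a b c : W}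
    (h : CliquesOrTrees H) (hab : H.Adj a b) (hac : H.Adj a c) (hbc : H.Adj b c) :
    H.IsClique (H.connectedComponentMk a).supp := by
  classical
  refine (h _).resolve_right fun htree => ?_
  have hb : b ∈ (H.connectedComponentMk a).supp := (ConnectedComponent.sound hab.reachable).symm
  have hc : c ∈ (H.connectedComponentMk a).supp := (ConnectedComponent.sound hac.reachable).symm
  exact htree.isAcyclic.cliqueFree le_rfl {⟨a, rfl⟩, ⟨b, hb⟩, ⟨c, hc⟩}
    (is3Clique_triple_iff.2 ⟨by exact hab, by exact hac, by exact hbc⟩)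

namespace SimpleGraph

noncomputable def induceInduceIso (s : Set V) (t : Set s) :
    (G.induce s).induce t ≃g G.induce (Subtype.val '' t) where
  toEquiv := Equiv.Set.image Subtype.val t Subtype.val_injective
  map_rel_iff' := by simp [Equiv.Set.image, Equiv.Set.imageOfInjOn]

lemma ConnectedComponent.mem_image_val_supp_of_adj (c : (G.induce s).ConnectedComponent)
    {x y : V} (hx : x ∈ Subtype.val '' c.supp) (hy : y ∈ s) (hxy : G.Adj x y) :
    y ∈ Subtype.val '' c.supp := by
  obtain ⟨x, hx, rfl⟩ := hx
  exact ⟨⟨y, hy⟩, c.mem_supp_of_adj_mem_supp hx hxy, rfl⟩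

lemma ConnectedComponent.image_val_supp_subset {B : Set V} (c : (G.induce s).ConnectedComponent)
    (hB : ∀ x ∈ c.supp, ∀ y : s, x.val ∈ B → G.Adj x y → y.val ∈ B)
    {x : s} (hx : x ∈ c.supp) (hxB : x.val ∈ B) : Subtype.val '' c.supp ⊆ B := by
  rintro _ ⟨y, hy, rfl⟩
  obtain ⟨p⟩ := c.reachable_of_mem_supp hx hy
  induction p with
  | nil => exact hxB
  | cons hadj p ih => exact ih (c.mem_supp_of_adj_mem_supp hx hadj) (hB _ hx _ hxB hadj) hy

lemma ConnectedComponent.exists_image_val_supp_eq (hst : s ⊆ t)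
    (c' : (G.induce t).ConnectedComponent) (hc' : Subtype.val '' c'.supp ⊆ s) :
    ∃ c : (G.induce s).ConnectedComponent, Subtype.val '' c.supp = Subtype.val '' c'.supp := by
  obtain ⟨x, hx⟩ := c'.nonempty_supp
  have hxs : x.val ∈ s := hc' ⟨x, hx, rfl⟩
  set c := (G.induce s).connectedComponentMk ⟨x, hxs⟩
  refine ⟨c, subset_antisymm ?_ ?_⟩
  · refine c.image_val_supp_subset (fun _ _ y hz hzy => ?_) (x := ⟨x, hxs⟩) rfl ⟨x, hx, rfl⟩
    exact c'.mem_image_val_supp_of_adj hz (hst y.prop) hzy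
  · refine c'.image_val_supp_subset (fun z hz y hzc hzy => ?_) hx ⟨⟨x, hxs⟩, rfl, rfl⟩
    exact c.mem_image_val_supp_of_adj hzc (hc' ⟨y, c'.mem_supp_of_adj_mem_supp hz hzy, rfl⟩) hzy

end SimpleGraph

lemma compIsClique_induce_iff (c : (G.induce s).ConnectedComponent) :
    CompIsClique (G.induce s) c ↔ G.IsClique (Subtype.val '' c.supp) :=
  isClique_induce_iff

lemma compIsTree_induce_iff (c : (G.induce s).ConnectedComponent) :
    CompIsTree (G.induce s) c ↔ (G.induce (Subtype.val '' c.supp)).IsTree :=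
  (induceInduceIso s c.supp).isTree_iff

lemma CliquesOrTrees.induce_insert {u : V} {K : Set V} (h : CliquesOrTrees (G.induce s))
    (hK : G.IsClique (insert u K)) (hu : ∀ w ∈ s, G.Adj u w → w ∈ K)
    (hKs : ∀ x ∈ K, ∀ y ∈ s, G.Adj x y → y ∈ K) : CliquesOrTrees (G.induce (insert u s)) := by
  intro c'
  by_cases huc : u ∈ Subtype.val '' c'.supp
  · obtain ⟨x, hx, hxu⟩ := huc
    refine Or.inl ((compIsClique_induce_iff c').2 (hK.subset ?_))
    refine c'.image_val_supp_subset (fun z _ y hz hzy => ?_) hx (Or.inl hxu)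
    rcases y.prop with hyu | hys
    · exact Or.inl hyu
    · rcases hz with hzu | hzK
      · exact Set.mem_insert_of_mem u (hu y hys (by rwa [hzu] at hzy))
      · exact Set.mem_insert_of_mem u (hKs z hzK y hys hzy)
  · obtain ⟨c, hc⟩ := c'.exists_image_val_supp_eq (Set.subset_insert u s) fun _ ⟨y, hy, hyx⟩ =>
      hyx ▸ y.prop.resolve_left fun hyu => huc ⟨y, hy, hyu⟩
    rw [compIsClique_induce_iff, compIsTree_induce_iff, ← hc, ← compIsClique_induce_iff,
      ← compIsTree_induce_iff]
    exact h c

lemma CliquesOrTrees.induce_insert_of_closed_twin {u v : V} (h : CliquesOrTrees (G.induce s))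
    (hv : v ∈ s) (hvc : (G.induce s).IsClique ((G.induce s).connectedComponentMk ⟨v, hv⟩).supp)
    (huv : G.Adj u v) (hnbhd : G.neighborSet u ∪ {u} = G.neighborSet v ∪ {v}) :
    CliquesOrTrees (G.induce (insert u s)) := by
  set c := (G.induce s).connectedComponentMk ⟨v, hv⟩
  have hvK : v ∈ Subtype.val '' c.supp := ⟨⟨v, hv⟩, rfl, rfl⟩
  have hK : G.IsClique (Subtype.val '' c.supp) := isClique_induce_iff.1 hvc
  have hNu : ∀ w, G.Adj u w → w = v ∨ G.Adj v w := fun w huw => by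
    have hw : w ∈ G.neighborSet u ∪ {u} := Or.inl huw
    rw [hnbhd] at hw
    exact hw.symm
  have hNv : ∀ w, G.Adj v w → w ≠ u → G.Adj u w := fun w hvw hwu => by
    have hw : w ∈ G.neighborSet v ∪ {v} := Or.inl hvw
    rw [← hnbhd] at hw
    exact hw.resolve_right hwu
  refine h.induce_insert (isClique_insert.2 ⟨hK, fun w hw huw => ?_⟩) (fun w hw huw => ?_)
    fun x hx y hy hxy => c.mem_image_val_supp_of_adj hx hy hxy
  · by_cases hwv : w = v
    · exact hwv ▸ huv
    · exact hNv w (hK hvK hw (Ne.symm hwv)) (Ne.symm huw)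
  · rcases hNu w huw with rfl | hvw
    · exact hvK
    · exact c.mem_image_val_supp_of_adj hvK hw hvw

lemma IsFeasible.sdiff_singleton_of_closed_twin [Finite V] {k : ℕ} {X : Set V} {u v : V}
    (hX : IsFeasible G k X) (hv : LargeDense G k v) (hvX : v ∉ X) (huv : G.Adj u v)
    (hnbhd : G.neighborSet u ∪ {u} = G.neighborSet v ∪ {v}) : IsFeasible G k (X \ {u}) := by
  obtain ⟨a, b, ha, hb, hva, hvb, hab⟩ := hv.exists_triangle X.toFinite hX.1
  have hvc := hX.2.isClique_supp_of_adj (a := ⟨v, hvX⟩) (b := ⟨a, ha⟩) (c := ⟨b, hb⟩)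
    (by exact hva) (by exact hvb) (by exact hab)
  refine ⟨(Set.ncard_sdiff_singleton_le X u).trans hX.1, ?_⟩
  rw [Set.compl_sdiff, Set.singleton_union]
  exact hX.2.induce_insert_of_closed_twin hvX hvc huv hnbhd

end

theorem stmt_12_general {V : Type*} [Fintype V] (G : SimpleGraph V) (k : ℕ)
    (u v : V) (hu : LargeDense G k u) (hv : LargeDense G k v) (huv : G.Adj u v)
    (hnbhd : G.neighborSet u ∪ {u} = G.neighborSet v ∪ {v})
    (X : Set V) (hX : IsFeasible G k X)
    (hmin : ∀ Y : Set V, IsFeasible G k Y → X.ncard ≤ Y.ncard) :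
    ({u, v} : Set V) ⊆ X ∨ ({u, v} : Set V) ∩ X = ∅ := by
  have not_split : ∀ {x y : V}, LargeDense G k y → G.Adj x y →
      G.neighborSet x ∪ {x} = G.neighborSet y ∪ {y} → x ∈ X → y ∉ X → False :=
    fun hy hxy hxy' hxX hyX => (hmin _ (hX.sdiff_singleton_of_closed_twin hy hyX hxy hxy')).not_gt
      (Set.ncard_sdiff_singleton_lt_of_mem hxX)
  by_cases huX : u ∈ X <;> by_cases hvX : v ∈ X
  · exact Or.inl (Set.insert_subset huX (Set.singleton_subset_iff.2 hvX))
  · exact (not_split hv huv hnbhd huX hvX).elim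
  · exact (not_split hu huv.symm hnbhd.symm hvX huX).elim
  · exact Or.inr (by simp [Set.eq_empty_iff_forall_notMem, huX, hvX])

/-- if `u` and `v` are adjacent large-dense vertices with the same closed
neighborhood, then every minimum-cardinality feasible solution `X` for `(G,k)` contains
either both or neither of them. -/
theorem stmt_12 {V : Type*} [Fintype V] (G : SimpleGraph V) (k : ℕ) (hk : 1 ≤ k)
    (u v : V) (hu : LargeDense G k u) (hv : LargeDense G k v) (huv : G.Adj u v)
    (hnbhd : G.neighborSet u ∪ {u} = G.neighborSet v ∪ {v})
    (X : Set V) (hX : IsFeasible G k X)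
    (hmin : ∀ Y : Set V, IsFeasible G k Y → X.ncard ≤ Y.ncard) :
    ({u, v} : Set V) ⊆ X ∨ ({u, v} : Set V) ∩ X = ∅ :=
  stmt_12_general G k u v hu hv huv hnbhd X hX hmin
end

section
/- Let G = (V,E) be a finite simple graph, k ≥ 1 an integer, and u, v two adjacent large-dense vertices of G with N(u) ∪ {u} = N(v) ∪ {v}. If X is a feasible solution for (G,k) with u ∈ X and v ∉ X, then X \ {u} is also a feasible solution for (G,k). -/
/-!
If the component of `v` in `G - X` were a tree, then `N(v) \ X` would be independent, so the at
most `k` vertices of `X ∩ N(v)` would cover every edge inside `N(v)`, giving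
`ρ(v) ≤ k |N(v)|`; with `|N(v)| > 7k` this contradicts density. Hence that component `C` is a
clique, namely `N[v] \ X`. As `N[u] = N[v]`, the neighbours of `u` outside `X` are exactly `C`,
so putting `u` back only enlarges `C` to the clique `C ∪ {u}` and leaves the other components of
`G - X` untouched.
-/

open SimpleGraph

namespace SimpleGraph

variable {V : Type*} {G : SimpleGraph V}

theorem IsAcyclic.not_adj_of_adj_of_adj (hG : G.IsAcyclic) {a b c : V} (hab : G.Adj a b)
    (hbc : G.Adj b c) : ¬ G.Adj c a := by
  intro hca
  refine hG (Walk.cons hab (Walk.cons hbc (Walk.cons hca Walk.nil))) ?_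
  rw [Walk.cons_isCycle_iff]
  simp [hab.ne, hab.ne.symm, hbc.ne, hca.ne, hca.ne.symm]

theorem ncard_edges_within_le {S T : Set V} (hS : S.Finite)
    (hT : ∀ a ∈ S, ∀ b ∈ S, G.Adj a b → a ∈ T ∨ b ∈ T) :
    {e : Sym2 V | e ∈ G.edgeSet ∧ ∀ x ∈ e, x ∈ S}.ncard ≤ (S ∩ T).ncard * S.ncard := by
  have hfin : ((S ∩ T) ×ˢ S).Finite := (hS.inter_of_left T).prod hS
  calc {e : Sym2 V | e ∈ G.edgeSet ∧ ∀ x ∈ e, x ∈ S}.ncard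
      ≤ ((fun p : V × V => s(p.1, p.2)) '' ((S ∩ T) ×ˢ S)).ncard := by
        refine Set.ncard_le_ncard (fun e he => ?_) (hfin.image _)
        induction e with | _ a b => ?_
        obtain ⟨hab, hS⟩ := he
        have ha := hS a (Sym2.mem_mk_left a b)
        have hb := hS b (Sym2.mem_mk_right a b)
        rcases hT a ha b hb hab with haT | hbT
        · exact ⟨(a, b), ⟨⟨ha, haT⟩, hb⟩, rfl⟩
        · exact ⟨(b, a), ⟨⟨hb, hbT⟩, ha⟩, Sym2.eq_swap⟩
    _ ≤ ((S ∩ T) ×ˢ S).ncard := Set.ncard_image_le hfin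
    _ = (S ∩ T).ncard * S.ncard := Set.ncard_prod

theorem adj_iff_of_neighborSet_union_eq {u v w : V}
    (h : G.neighborSet u ∪ {u} = G.neighborSet v ∪ {v}) (hwu : w ≠ u) :
    G.Adj u w ↔ w = v ∨ G.Adj v w := by
  have hw := Set.ext_iff.mp h w
  simp only [Set.mem_union, mem_neighborSet, Set.mem_singleton_iff, hwu, or_false] at hw
  rw [hw, or_comm]

namespace ComponentCompl

variable {K : Set V}

theorem subset_of_forall_adj {C : G.ComponentCompl K} {S : Set V} {w : V} (hwC : w ∈ C)
    (hwS : w ∈ S) (hS : ∀ a ∈ C, ∀ b ∈ C, a ∈ S → G.Adj a b → b ∈ S) : (C : Set V) ⊆ S := by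
  obtain ⟨hwK, rfl⟩ := hwC
  rintro x ⟨hxK, hx⟩
  obtain ⟨p⟩ := ConnectedComponent.exact hx.symm
  suffices ∀ a b (p : (G.induce Kᶜ).Walk a b), (a : V) ∈ G.componentComplMk hwK →
      (a : V) ∈ S → (b : V) ∈ S from this _ _ p (G.componentComplMk_mem hwK) hwS
  intro a b p
  induction p with
  | nil => exact fun _ ha => ha
  | @cons a b _ hab _ ih =>
    intro haC haS
    have hbC := mem_of_adj _ _ haC b.2 hab
    exact ih hbC (hS _ haC _ hbC haS hab)

theorem mem_componentComplMk_iff_of_isClique {v w : V} {hvK : v ∉ K}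
    (hC : G.IsClique (G.componentComplMk hvK : Set V)) (hwK : w ∉ K) :
    w ∈ G.componentComplMk hvK ↔ w = v ∨ G.Adj v w := by
  constructor
  · intro hw
    by_cases hwv : w = v
    · exact Or.inl hwv
    · exact Or.inr (hC (G.componentComplMk_mem hvK) hw (Ne.symm hwv))
  · rintro (rfl | hvw)
    · exact G.componentComplMk_mem hvK
    · exact mem_of_adj v w (G.componentComplMk_mem hvK) hwK hvw

end ComponentCompl

theorem cliquesOrTrees_induce_compl_iff {K : Set V} :
    CliquesOrTrees (G.induce Kᶜ) ↔
      ∀ C : G.ComponentCompl K, G.IsClique (C : Set V) ∨ (G.induce (C : Set V)).IsTree := by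
  refine forall_congr' fun C => or_congr ?_ ?_
  · constructor
    · rintro hC a ⟨ha, haC⟩ b ⟨hb, hbC⟩ hab
      exact hC haC hbC fun h => hab (congrArg Subtype.val h)
    · rintro hC a haC b hbC hab
      exact hC ⟨a.2, haC⟩ ⟨b.2, hbC⟩ (Subtype.val_injective.ne hab)
  · exact Iso.isTree_iff
      { toEquiv := Equiv.subtypeSubtypeEquivSubtypeExists _ _, map_rel_iff' := Iff.rfl }

theorem cliquesOrTrees_induce_compl_diff_singleton {X : Set V} {u v : V} (hvX : v ∉ X)
    (hC : G.IsClique (G.componentComplMk hvX : Set V))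
    (hu : ∀ w ∉ X, G.Adj u w ↔ w ∈ G.componentComplMk hvX)
    (h : CliquesOrTrees (G.induce Xᶜ)) : CliquesOrTrees (G.induce (X \ {u})ᶜ) := by
  rw [cliquesOrTrees_induce_compl_iff] at h ⊢
  set C := G.componentComplMk hvX
  have notMem_of_ne {w : V} {c : G.ComponentCompl (X \ {u})} (hw : w ∈ c) (hwu : w ≠ u) :
      w ∉ X := fun hwX => c.notMem_of_mem hw ⟨hwX, hwu⟩
  intro c
  by_cases huc : u ∈ c
  · have hsub : (c : Set V) ⊆ insert u C := by
      refine c.subset_of_forall_adj huc (Set.mem_insert u _) fun a _ b hb ha hab => ?_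
      by_cases hbu : b = u
      · exact Or.inl hbu
      have hbX := notMem_of_ne hb hbu
      rcases ha with rfl | haC
      · exact Or.inr ((hu b hbX).mp hab)
      · exact Or.inr (C.mem_of_adj a b haC hbX hab)
    exact Or.inl <|
      (isClique_insert.mpr ⟨hC, fun b hb _ => (hu b (C.notMem_of_mem hb)).mpr hb⟩).subset hsub
  · obtain ⟨w, hw⟩ := c.nonempty
    have hwX := notMem_of_ne hw (ne_of_mem_of_not_mem hw huc)
    have hcD : (c : Set V) = G.componentComplMk hwX := by
      apply subset_antisymm
      · refine c.subset_of_forall_adj hw (G.componentComplMk_mem hwX) fun a _ b hb ha hab => ?_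
        exact ComponentCompl.mem_of_adj a b ha (notMem_of_ne hb (ne_of_mem_of_not_mem hb huc)) hab
      · refine ComponentCompl.subset_of_forall_adj (G.componentComplMk_mem hwX) hw
          fun a _ b hb ha hab => ?_
        exact c.mem_of_adj a b ha (fun hbK => ComponentCompl.notMem_of_mem hb hbK.1) hab
    rw [hcD]
    exact h _

end SimpleGraph

theorem LargeDense.exists_adj_of_ncard_le {V : Type*} {G : SimpleGraph V} {k : ℕ} {v : V}
    (hv : LargeDense G k v) {X : Set V} (hX : X.Finite) (hXk : X.ncard ≤ k) :
    ∃ a b, G.Adj v a ∧ G.Adj v b ∧ a ∉ X ∧ b ∉ X ∧ G.Adj a b := by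
  by_contra! hcover
  obtain ⟨hlarge, hdense⟩ := hv
  set n := (G.neighborSet v).ncard
  have hN : (G.neighborSet v).Finite := Set.finite_of_ncard_pos (by omega)
  have hrho : rho G v ≤ k * n :=
    calc rho G v ≤ (G.neighborSet v ∩ X).ncard * n :=
          ncard_edges_within_le hN fun a ha b hb hab => by
            by_contra! h
            exact hcover a b ha hb h.1 h.2 hab
      _ ≤ k * n := Nat.mul_le_mul_right n ((Set.ncard_inter_le_ncard_right _ _ hX).trans hXk)
  have : n - 1 < 4 * k := Nat.lt_of_mul_lt_mul_left (a := n) (by linarith)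
  omega

theorem LargeDense.isClique_componentComplMk {V : Type*} {G : SimpleGraph V} {k : ℕ} {v : V}
    (hv : LargeDense G k v) {X : Set V} (hX : X.Finite) (hXk : X.ncard ≤ k) (hvX : v ∉ X)
    (h : CliquesOrTrees (G.induce Xᶜ)) : G.IsClique (G.componentComplMk hvX : Set V) := by
  set C := G.componentComplMk hvX
  refine (cliquesOrTrees_induce_compl_iff.mp h C).resolve_right fun htree => ?_
  obtain ⟨a, b, hva, hvb, haX, hbX, hab⟩ := hv.exists_adj_of_ncard_le hX hXk
  have hvC : v ∈ C := G.componentComplMk_mem hvX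
  have haC := C.mem_of_adj v a hvC haX hva
  have hbC := C.mem_of_adj v b hvC hbX hvb
  exact htree.isAcyclic.not_adj_of_adj_of_adj (a := ⟨v, hvC⟩) (b := ⟨a, haC⟩) (c := ⟨b, hbC⟩)
    hva hab hvb.symm

theorem stmt_13_general {V : Type*} [Fintype V] (G : SimpleGraph V) (k : ℕ)
    (u v : V) (hv : LargeDense G k v)
    (hnbhd : G.neighborSet u ∪ {u} = G.neighborSet v ∪ {v})
    (X : Set V) (hX : IsFeasible G k X) (huX : u ∈ X) (hvX : v ∉ X) :
    IsFeasible G k (X \ {u}) := by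
  obtain ⟨hXk, hX⟩ := hX
  have hC := hv.isClique_componentComplMk X.toFinite hXk hvX hX
  refine ⟨(Set.ncard_sdiff_singleton_le X u).trans hXk,
    cliquesOrTrees_induce_compl_diff_singleton hvX hC (fun w hwX => ?_) hX⟩
  rw [adj_iff_of_neighborSet_union_eq hnbhd (ne_of_mem_of_not_mem huX hwX).symm,
    ComponentCompl.mem_componentComplMk_iff_of_isClique hC hwX]

/-- if `u` and `v` are adjacent large-dense vertices with the same closed
neighborhood and `X` is a feasible solution for `(G,k)` with `u ∈ X` and `v ∉ X`,
then `X \ {u}` is also a feasible solution for `(G,k)`. -/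
theorem stmt_13 {V : Type*} [Fintype V] (G : SimpleGraph V) (k : ℕ) (hk : 1 ≤ k)
    (u v : V) (hu : LargeDense G k u) (hv : LargeDense G k v) (huv : G.Adj u v)
    (hnbhd : G.neighborSet u ∪ {u} = G.neighborSet v ∪ {v})
    (X : Set V) (hX : IsFeasible G k X) (huX : u ∈ X) (hvX : v ∉ X) :
    IsFeasible G k (X \ {u}) :=
  stmt_13_general G k u v hv hnbhd X hX huX hvX
end
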